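/- arXiv:1809.03621 — 3 statements merged into one kernel-verified Lean document; each statement's English description precedes it below -/
import Mathlib

section
/- Let B be an m×n real matrix and C = Cᵀ ≤ 0 an n×n real negative semidefinite matrix with ker C ⊆ ker B. Then there exists a symmetric positive semidefinite m×m matrix A = Aᵀ ≥ 0 such that the block matrix [[-A, B], [Bᵀ, C]] is negative semidefinite; in particular, if C ≠ 0 and φ > 0 is the smallest nonzero eigenvalue of -C, then A = (1/φ) B Bᵀ works. -/
open Matrix

section Aux

variable {n : ℕ}

private lemma herm_of_symm (C : Matrix (Fin n) (Fin n) ℝ) (hCsymm : C.IsSymm) :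
    (-C).IsHermitian := by
  ext i j
  simp only [conjTranspose_apply, Matrix.neg_apply, star_trivial, neg_inj]
  exact hCsymm.apply i j

private lemma sum_dot {T : Finset (Fin n)} (f : Fin n → Fin n → ℝ) (u : Fin n → ℝ) :
    (∑ i ∈ T, f i) ⬝ᵥ u = ∑ i ∈ T, f i ⬝ᵥ u := by
  simp only [dotProduct, Finset.sum_apply, Finset.sum_mul]
  exact Finset.sum_comm

private lemma dot_sum {T : Finset (Fin n)} (u : Fin n → ℝ) (f : Fin n → Fin n → ℝ) :
    u ⬝ᵥ (∑ i ∈ T, f i) = ∑ i ∈ T, u ⬝ᵥ f i := by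
  simp only [dotProduct, Finset.sum_apply, Finset.mul_sum]
  exact Finset.sum_comm

private lemma sum_repr_dot (D : Matrix (Fin n) (Fin n) ℝ) (hD : D.IsHermitian) (w : Fin n → ℝ) :
    w = ∑ i, ((hD.eigenvectorBasis i : Fin n → ℝ) ⬝ᵥ w) • (hD.eigenvectorBasis i : Fin n → ℝ) := by
  have h := hD.eigenvectorBasis.sum_repr' ((WithLp.equiv 2 (Fin n → ℝ)).symm w)
  have h2 : ∀ i, (inner ℝ (hD.eigenvectorBasis i) ((WithLp.equiv 2 (Fin n → ℝ)).symm w) : ℝ)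
      = (hD.eigenvectorBasis i : Fin n → ℝ) ⬝ᵥ w := by
    intro i
    simp [PiLp.inner_apply, RCLike.inner_apply, dotProduct, mul_comm]
  simp_rw [h2] at h
  have h3 := congrArg (WithLp.ofLp (p := 2)) h
  simp only [WithLp.ofLp_sum, WithLp.ofLp_smul, WithLp.equiv_symm_apply, WithLp.ofLp_toLp] at h3
  exact h3.symm

private lemma orth_dot (D : Matrix (Fin n) (Fin n) ℝ) (hD : D.IsHermitian) (i j : Fin n) :
    (hD.eigenvectorBasis i : Fin n → ℝ) ⬝ᵥ (hD.eigenvectorBasis j : Fin n → ℝ) =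
      if i = j then 1 else 0 := by
  have h := orthonormal_iff_ite.mp hD.eigenvectorBasis.orthonormal i j
  simpa [PiLp.inner_apply, RCLike.inner_apply, dotProduct, mul_comm] using h

private lemma eigvec_eq (D : Matrix (Fin n) (Fin n) ℝ) (hD : D.IsHermitian) (i : Fin n) :
    D *ᵥ (hD.eigenvectorBasis i : Fin n → ℝ)
      = hD.eigenvalues i • (hD.eigenvectorBasis i : Fin n → ℝ) :=
  hD.mulVec_eigenvectorBasis i

private lemma symm_dot (D : Matrix (Fin n) (Fin n) ℝ) (hDt : Dᵀ = D) (a b : Fin n → ℝ) :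
    a ⬝ᵥ D *ᵥ b = b ⬝ᵥ D *ᵥ a := by
  rw [dotProduct_mulVec a D b, ← hDt, mulVec_transpose, hDt, dotProduct_comm]

/-- Eigenvalues of a PSD matrix are nonnegative. -/
private lemma eig_nonneg (D : Matrix (Fin n) (Fin n) ℝ) (hD : D.IsHermitian)
    (hpsd : ∀ w : Fin n → ℝ, 0 ≤ w ⬝ᵥ D *ᵥ w) (i : Fin n) : 0 ≤ hD.eigenvalues i := by
  have h := hpsd (hD.eigenvectorBasis i : Fin n → ℝ)
  rw [eigvec_eq D hD i, dotProduct_smul, smul_eq_mul, orth_dot D hD i i] at h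
  simpa using h

private lemma eigvec_ne_zero (D : Matrix (Fin n) (Fin n) ℝ) (hD : D.IsHermitian) (i : Fin n) :
    (hD.eigenvectorBasis i : Fin n → ℝ) ≠ 0 := by
  intro h
  have := orth_dot D hD i i
  rw [h] at this
  simp at this

/-- If `D v = μ v` with `v ≠ 0`, then `μ` is one of the spectral eigenvalues. -/
private lemma eig_mem (D : Matrix (Fin n) (Fin n) ℝ) (hD : D.IsHermitian) (hDt : Dᵀ = D)
    (μ : ℝ) (v : Fin n → ℝ) (hv : v ≠ 0) (hev : D *ᵥ v = μ • v) :
    ∃ i, hD.eigenvalues i = μ := by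
  have hc : ∃ i, (hD.eigenvectorBasis i : Fin n → ℝ) ⬝ᵥ v ≠ 0 := by
    by_contra hall
    push_neg at hall
    apply hv
    have := sum_repr_dot D hD v
    simp_rw [hall, zero_smul, Finset.sum_const_zero] at this
    exact this
  obtain ⟨i, hi⟩ := hc
  refine ⟨i, ?_⟩
  have h1 : (hD.eigenvectorBasis i : Fin n → ℝ) ⬝ᵥ D *ᵥ v
      = μ * ((hD.eigenvectorBasis i : Fin n → ℝ) ⬝ᵥ v) := by
    rw [hev, dotProduct_smul, smul_eq_mul]
  have h2 : (hD.eigenvectorBasis i : Fin n → ℝ) ⬝ᵥ D *ᵥ v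
      = hD.eigenvalues i * ((hD.eigenvectorBasis i : Fin n → ℝ) ⬝ᵥ v) := by
    rw [symm_dot D hDt, eigvec_eq D hD i, dotProduct_smul, smul_eq_mul, dotProduct_comm]
  exact mul_right_cancel₀ hi (h2.symm.trans h1)

private lemma dot_self_nonneg (w : Fin n → ℝ) : 0 ≤ w ⬝ᵥ w :=
  Finset.sum_nonneg fun i _ => mul_self_nonneg (w i)

/-- The key sufficiency estimate. -/
private lemma key_estimate {m : ℕ} (B : Matrix (Fin m) (Fin n) ℝ) (C : Matrix (Fin n) (Fin n) ℝ)
    (hCsymm : C.IsSymm)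
    (hker : ∀ y : Fin n → ℝ, C *ᵥ y = 0 → B *ᵥ y = 0)
    (φ : ℝ) (hφ : 0 < φ)
    (hmin : ∀ i, (herm_of_symm C hCsymm).eigenvalues i = 0 ∨
      φ ≤ (herm_of_symm C hCsymm).eigenvalues i)
    (x : Fin m → ℝ) (y : Fin n → ℝ) :
    -(x ⬝ᵥ ((1/φ) • (B * Bᵀ)) *ᵥ x) + 2 * (x ⬝ᵥ B *ᵥ y) + y ⬝ᵥ C *ᵥ y ≤ 0 := by
  set D : Matrix (Fin n) (Fin n) ℝ := -C with hDdef
  have hD : D.IsHermitian := herm_of_symm C hCsymm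
  have hDt : Dᵀ = D := by
    rw [hDdef, transpose_neg, hCsymm.eq]
  set v : Fin n → Fin n → ℝ := fun i => (hD.eigenvectorBasis i : Fin n → ℝ) with hvdef
  set μ : Fin n → ℝ := hD.eigenvalues with hμdef
  have hDv : ∀ i, D *ᵥ v i = μ i • v i := fun i => eigvec_eq D hD i
  have horth : ∀ i j, v i ⬝ᵥ v j = if i = j then 1 else 0 := orth_dot D hD
  set c : Fin n → ℝ := fun i => v i ⬝ᵥ y with hcdef
  set S : Finset (Fin n) := Finset.univ.filter (fun i => μ i ≠ 0) with hSdef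
  set y₂ : Fin n → ℝ := ∑ i ∈ S, c i • v i with hy₂def
  set y₁ : Fin n → ℝ := y - y₂ with hy₁def
  have hy : y = ∑ i, c i • v i := sum_repr_dot D hD y
  -- mulVec of sums
  have hmv : ∀ (T : Finset (Fin n)), D *ᵥ (∑ i ∈ T, c i • v i) = ∑ i ∈ T, (c i * μ i) • v i := by
    intro T
    rw [show D *ᵥ (∑ i ∈ T, c i • v i) = D.mulVecLin (∑ i ∈ T, c i • v i) from rfl, map_sum]
    refine Finset.sum_congr rfl fun i _ => ?_
    rw [LinearMap.map_smul, mulVecLin_apply, hDv i, smul_smul]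
  have hDy : D *ᵥ y = ∑ i ∈ S, (c i * μ i) • v i := by
    rw [hy, hmv]
    refine (Finset.sum_subset (Finset.subset_univ S) ?_).symm
    intro i _ hiS
    have : μ i = 0 := by
      by_contra h
      exact hiS (Finset.mem_filter.mpr ⟨Finset.mem_univ i, h⟩)
    rw [this, mul_zero, zero_smul]
  have hDy₂ : D *ᵥ y₂ = ∑ i ∈ S, (c i * μ i) • v i := hmv S
  have hDy₁ : D *ᵥ y₁ = 0 := by
    rw [hy₁def, mulVec_sub, hDy, hDy₂, sub_self]
  have hCy₁ : C *ᵥ y₁ = 0 := by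
    have : (-D) *ᵥ y₁ = 0 := by rw [neg_mulVec, hDy₁, neg_zero]
    simpa [hDdef] using this
  have hBy₁ : B *ᵥ y₁ = 0 := hker y₁ hCy₁
  have hysum : y = y₁ + y₂ := by rw [hy₁def]; ring
  have hBy : B *ᵥ y = B *ᵥ y₂ := by
    rw [hysum, mulVec_add, hBy₁, zero_add]
  -- yᵀ C y = -(y₂ᵀ D y₂)
  have hCyy : y ⬝ᵥ C *ᵥ y = -(y₂ ⬝ᵥ D *ᵥ y₂) := by
    have h1 : y ⬝ᵥ D *ᵥ y = y₂ ⬝ᵥ D *ᵥ y₂ := by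
      rw [hDy, ← hDy₂]
      nth_rewrite 1 [hysum]
      rw [add_dotProduct]
      have : y₁ ⬝ᵥ D *ᵥ y₂ = 0 := by
        rw [symm_dot D hDt, hDy₁, dotProduct_zero]
      rw [this, zero_add]
    have h2 : y ⬝ᵥ C *ᵥ y = -(y ⬝ᵥ D *ᵥ y) := by
      have hC : C = -D := by rw [hDdef, neg_neg]
      rw [hC, neg_mulVec, dotProduct_neg]
    rw [h2, h1]
  -- quadratic forms on y₂
  have hy₂y₂ : y₂ ⬝ᵥ y₂ = ∑ i ∈ S, c i ^ 2 := by
    rw [hy₂def, sum_dot]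
    refine Finset.sum_congr rfl fun i hi => ?_
    rw [dot_sum]
    rw [Finset.sum_eq_single i]
    · rw [smul_dotProduct, dotProduct_smul, horth i i, if_pos rfl]
      simp only [smul_eq_mul, mul_one]
      ring
    · intro j hj hji
      rw [smul_dotProduct, dotProduct_smul, horth i j, if_neg (fun h => hji h.symm)]
      simp
    · intro h; exact absurd hi h
  have hDy₂y₂ : y₂ ⬝ᵥ D *ᵥ y₂ = ∑ i ∈ S, μ i * c i ^ 2 := by
    rw [hDy₂, hy₂def, sum_dot]
    refine Finset.sum_congr rfl fun i hi => ?_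
    rw [dot_sum]
    rw [Finset.sum_eq_single i]
    · rw [smul_dotProduct, dotProduct_smul, horth i i, if_pos rfl]
      simp only [smul_eq_mul, mul_one]
      ring
    · intro j hj hji
      rw [smul_dotProduct, dotProduct_smul, horth i j, if_neg (fun h => hji h.symm)]
      simp
    · intro h; exact absurd hi h
  have hspec : φ * (y₂ ⬝ᵥ y₂) ≤ y₂ ⬝ᵥ D *ᵥ y₂ := by
    rw [hy₂y₂, hDy₂y₂, Finset.mul_sum]
    refine Finset.sum_le_sum fun i hi => ?_
    have hμi : μ i ≠ 0 := (Finset.mem_filter.mp hi).2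
    have hφμ : φ ≤ μ i := (hmin i).resolve_left hμi
    exact mul_le_mul_of_nonneg_right hφμ (sq_nonneg _)
  -- the w := Bᵀ x vector
  set w : Fin n → ℝ := Bᵀ *ᵥ x with hwdef
  have hxBy₂ : x ⬝ᵥ B *ᵥ y₂ = w ⬝ᵥ y₂ := by
    rw [dotProduct_mulVec, hwdef, mulVec_transpose]
  have hA : x ⬝ᵥ ((1/φ) • (B * Bᵀ)) *ᵥ x = (1/φ) * (w ⬝ᵥ w) := by
    rw [smul_mulVec, dotProduct_smul, smul_eq_mul, ← mulVec_mulVec,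
      dotProduct_mulVec x B, hwdef, mulVec_transpose]
  -- AM-GM
  have hamgm : 2 * (w ⬝ᵥ y₂) ≤ (1/φ) * (w ⬝ᵥ w) + φ * (y₂ ⬝ᵥ y₂) := by
    have h0 : 0 ≤ (φ⁻¹ • w - y₂) ⬝ᵥ (φ⁻¹ • w - y₂) := dot_self_nonneg _
    have hexp : (φ⁻¹ • w - y₂) ⬝ᵥ (φ⁻¹ • w - y₂)
        = φ⁻¹ * φ⁻¹ * (w ⬝ᵥ w) - 2 * φ⁻¹ * (w ⬝ᵥ y₂) + y₂ ⬝ᵥ y₂ := by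
      simp only [sub_dotProduct, dotProduct_sub, smul_dotProduct, dotProduct_smul,
        smul_eq_mul, dotProduct_comm y₂ w]
      ring
    rw [hexp] at h0
    have h2 := mul_nonneg hφ.le h0
    have h3 : φ * (φ⁻¹ * φ⁻¹ * (w ⬝ᵥ w) - 2 * φ⁻¹ * (w ⬝ᵥ y₂) + y₂ ⬝ᵥ y₂)
        = φ⁻¹ * (w ⬝ᵥ w) - 2 * (w ⬝ᵥ y₂) + φ * (y₂ ⬝ᵥ y₂) := by
      field_simp
    rw [h3] at h2
    rw [one_div]
    linarith
  rw [hA, hBy, hxBy₂, hCyy]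
  linarith

end Aux

/-- sufficiency. If C = Cᵀ ≤ 0 and ker C ⊆ ker B, then there exists
A = Aᵀ ≥ 0 making the block quadratic form (x,y) ↦ -xᵀAx + 2xᵀBy + yᵀCy nonpositive;
in particular, if C ≠ 0 and φ > 0 is the smallest nonzero eigenvalue of -C, then
A = (1/φ) B Bᵀ works. -/
theorem stmt_1 {m n : ℕ} (B : Matrix (Fin m) (Fin n) ℝ) (C : Matrix (Fin n) (Fin n) ℝ)
    (hCsymm : C.IsSymm) (hCnsd : ∀ y : Fin n → ℝ, y ⬝ᵥ C *ᵥ y ≤ 0)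
    (hker : ∀ y : Fin n → ℝ, C *ᵥ y = 0 → B *ᵥ y = 0) :
    (∃ A : Matrix (Fin m) (Fin m) ℝ, A.IsSymm ∧ (∀ x : Fin m → ℝ, 0 ≤ x ⬝ᵥ A *ᵥ x) ∧
      ∀ (x : Fin m → ℝ) (y : Fin n → ℝ),
        -(x ⬝ᵥ A *ᵥ x) + 2 * (x ⬝ᵥ B *ᵥ y) + y ⬝ᵥ C *ᵥ y ≤ 0) ∧
    (∀ φ : ℝ, 0 < φ →
      (∃ v : Fin n → ℝ, v ≠ 0 ∧ (-C) *ᵥ v = φ • v) →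
      (∀ μ : ℝ, μ ≠ 0 → (∃ v : Fin n → ℝ, v ≠ 0 ∧ (-C) *ᵥ v = μ • v) → φ ≤ μ) →
      ∀ (x : Fin m → ℝ) (y : Fin n → ℝ),
        -(x ⬝ᵥ ((1/φ) • (B * Bᵀ)) *ᵥ x) + 2 * (x ⬝ᵥ B *ᵥ y) + y ⬝ᵥ C *ᵥ y ≤ 0) := by
  have hD : (-C).IsHermitian := herm_of_symm C hCsymm
  have hpsd : ∀ w : Fin n → ℝ, 0 ≤ w ⬝ᵥ (-C) *ᵥ w := by
    intro w
    rw [neg_mulVec, dotProduct_neg]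
    linarith [hCnsd w]
  have hnn : ∀ i, 0 ≤ hD.eigenvalues i := eig_nonneg (-C) hD hpsd
  constructor
  · -- existence
    by_cases hC0 : ∀ y : Fin n → ℝ, C *ᵥ y = 0
    · refine ⟨0, ?_, ?_, ?_⟩
      · simp [Matrix.IsSymm]
      · intro x; simp
      · intro x y
        rw [hker y (hC0 y), hC0 y]
        simp
    · push_neg at hC0
      obtain ⟨y₀, hy₀⟩ := hC0
      set T : Finset (Fin n) := Finset.univ.filter (fun i => hD.eigenvalues i ≠ 0) with hTdef
      have hTne : T.Nonempty := by
        by_contra hT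
        rw [Finset.not_nonempty_iff_eq_empty] at hT
        have hall : ∀ i, hD.eigenvalues i = 0 := by
          intro i
          by_contra h
          have : i ∈ T := Finset.mem_filter.mpr ⟨Finset.mem_univ i, h⟩
          rw [hT] at this
          exact absurd this (Finset.notMem_empty i)
        have h0 : (-C) *ᵥ y₀ = 0 := by
          have hrep := sum_repr_dot (-C) hD y₀
          rw [show (-C) *ᵥ y₀ = (-C).mulVecLin y₀ from rfl]
          nth_rewrite 1 [hrep]
          rw [map_sum]
          refine Finset.sum_eq_zero fun i _ => ?_
          rw [LinearMap.map_smul, mulVecLin_apply, eigvec_eq (-C) hD i, hall i, zero_smul,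
            smul_zero]
        rw [neg_mulVec, neg_eq_zero] at h0
        exact hy₀ h0
      set V : Finset ℝ := T.image hD.eigenvalues with hVdef
      have hVne : V.Nonempty := hTne.image _
      set φ : ℝ := V.min' hVne with hφdef
      obtain ⟨i₀, hi₀T, hi₀⟩ : ∃ i ∈ T, hD.eigenvalues i = φ := by
        exact Finset.mem_image.mp (V.min'_mem hVne)
      have hφpos : 0 < φ := by
        have h1 : hD.eigenvalues i₀ ≠ 0 := (Finset.mem_filter.mp hi₀T).2
        have h2 := hnn i₀
        rw [hi₀] at h1 h2
        exact lt_of_le_of_ne h2 (Ne.symm h1)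
      have hmin : ∀ i, hD.eigenvalues i = 0 ∨ φ ≤ hD.eigenvalues i := by
        intro i
        by_cases h : hD.eigenvalues i = 0
        · exact Or.inl h
        · refine Or.inr (V.min'_le _ ?_)
          exact Finset.mem_image_of_mem _ (Finset.mem_filter.mpr ⟨Finset.mem_univ i, h⟩)
      exact ⟨(1/φ) • (B * Bᵀ), by
          rw [Matrix.IsSymm, transpose_smul, transpose_mul, transpose_transpose],
        fun x => by
          rw [smul_mulVec, dotProduct_smul, smul_eq_mul, ← mulVec_mulVec,
            dotProduct_mulVec x B, mulVec_transpose]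
          exact mul_nonneg (by positivity) (dot_self_nonneg _),
        key_estimate B C hCsymm hker φ hφpos hmin⟩
  · -- the explicit φ statement
    intro φ hφ _ hminφ x y
    have hmin : ∀ i, hD.eigenvalues i = 0 ∨ φ ≤ hD.eigenvalues i := by
      intro i
      by_cases h : hD.eigenvalues i = 0
      · exact Or.inl h
      · refine Or.inr (hminφ _ h ⟨(hD.eigenvectorBasis i : Fin n → ℝ),
          eigvec_ne_zero (-C) hD i, eigvec_eq (-C) hD i⟩)
    exact key_estimate B C hCsymm hker φ hφ hmin x y
end

section
/- Let α: ℝⁿ → ℝⁿ be continuously differentiable with Jacobian J, let Q = Qᵀ > 0 be an n×n matrix, and suppose Q J(z) + J(z)ᵀ Q ≤ 2λ Iₙ for all z ∈ ℝⁿ. Then for all x, x̂ ∈ ℝⁿ, (x - x̂)ᵀ Q (α(x) - α(x̂)) ≤ λ ‖x - x̂‖². -/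
/-!
Along the segment `t ↦ x̂ + t • (x - x̂)` the scalar function `t ↦ ⟪Q (x - x̂), α (x̂ + t • (x - x̂))⟫`
has derivative `⟪Q v, J z v⟫ = ½ (⟪Q v, J z v⟫ + ⟪J z v, Q v⟫) ≤ λ ‖v‖²` with `v = x - x̂`,
so by the mean value inequality it increases by at most `λ ‖v‖²` on `[0, 1]`.
-/

theorem ContinuousLinearMap.map_sub_le_of_hasFDerivAt
    {E F : Type*} [NormedAddCommGroup E] [NormedSpace ℝ E] [NormedAddCommGroup F]
    [NormedSpace ℝ F] {f : E → F} {f' : E → E →L[ℝ] F} (hf : ∀ z, HasFDerivAt f (f' z) z)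
    (ℓ : F →L[ℝ] ℝ) {x y : E} {C : ℝ} (hC : ∀ z, ℓ (f' z (y - x)) ≤ C) :
    ℓ (f y - f x) ≤ C := by
  set g : ℝ → ℝ := fun t => ℓ (f (x + t • (y - x)))
  have hg : ∀ t, HasDerivAt g (ℓ (f' (x + t • (y - x)) (y - x))) t := fun t => by
    have hline : HasDerivAt (fun t : ℝ => x + t • (y - x)) (y - x) t := by
      simpa using ((hasDerivAt_id t).smul_const (y - x)).const_add x
    exact ℓ.hasFDerivAt.comp_hasDerivAt t ((hf _).comp_hasDerivAt t hline)
  have hmvt := image_sub_le_mul_sub_of_deriv_le (fun t => (hg t).differentiableAt)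
    (fun t => (hg t).deriv ▸ hC _) zero_le_one
  simpa [g] using hmvt

theorem stmt_6_general {n : ℕ} (α : EuclideanSpace ℝ (Fin n) → EuclideanSpace ℝ (Fin n))
    (J : EuclideanSpace ℝ (Fin n) → (EuclideanSpace ℝ (Fin n) →L[ℝ] EuclideanSpace ℝ (Fin n)))
    (hderiv : ∀ z, HasFDerivAt α (J z) z)
    (Q : EuclideanSpace ℝ (Fin n) →L[ℝ] EuclideanSpace ℝ (Fin n))
    (lam : ℝ)
    (hbound : ∀ z v, (inner ℝ (Q v) (J z v) : ℝ) + (inner ℝ (J z v) (Q v) : ℝ) ≤ 2 * lam * ‖v‖^2) :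
    ∀ x xh : EuclideanSpace ℝ (Fin n),
      (inner ℝ (Q (x - xh)) (α x - α xh) : ℝ) ≤ lam * ‖x - xh‖^2 := by
  intro x xh
  have hderiv_bound : ∀ z, (inner ℝ (Q (x - xh)) (J z (x - xh)) : ℝ) ≤ lam * ‖x - xh‖^2 :=
    fun z => by linarith [hbound z (x - xh), real_inner_comm (Q (x - xh)) (J z (x - xh))]
  exact (innerSL ℝ (Q (x - xh))).map_sub_le_of_hasFDerivAt hderiv hderiv_bound

/-- if α is C¹ with Jacobian J and QJ(z) + J(z)ᵀQ ≤ 2λI for all z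
(with Q = Qᵀ > 0), then (x - x̂)ᵀQ(α(x) - α(x̂)) ≤ λ‖x - x̂‖². -/
theorem stmt_6 {n : ℕ} (α : EuclideanSpace ℝ (Fin n) → EuclideanSpace ℝ (Fin n))
    (J : EuclideanSpace ℝ (Fin n) → (EuclideanSpace ℝ (Fin n) →L[ℝ] EuclideanSpace ℝ (Fin n)))
    (hderiv : ∀ z, HasFDerivAt α (J z) z) (hJcont : Continuous J)
    (Q : EuclideanSpace ℝ (Fin n) →L[ℝ] EuclideanSpace ℝ (Fin n))
    (hQsymm : ∀ x y, (inner ℝ (Q x) y : ℝ) = inner ℝ x (Q y))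
    (hQpos : ∀ x, x ≠ 0 → 0 < (inner ℝ (Q x) x : ℝ))
    (lam : ℝ)
    (hbound : ∀ z v, (inner ℝ (Q v) (J z v) : ℝ) + (inner ℝ (J z v) (Q v) : ℝ) ≤ 2 * lam * ‖v‖^2) :
    ∀ x xh : EuclideanSpace ℝ (Fin n),
      (inner ℝ (Q (x - xh)) (α x - α xh) : ℝ) ≤ lam * ‖x - xh‖^2 :=
  stmt_6_general α J hderiv Q lam hbound
end

section
/- Consider the scalar nonlinear system ẋ₁ = -1.5x₁³ + u, ẋ₂ = -x₂³ + u with output (x₁+x₂)/2, and the abstraction x̂̇ = -1.5x̂³ + û with output x̂, with interface u = û. Define V(x, x̂) = (1/2)((x₁ - x̂)² + (x₂ - x̂)²). Then for all x₁, x₂, x̂, û ∈ ℝ: (i) ((x₁+x₂)/2 - x̂)² ≤ V(x, x̂); and (ii) (x₁ - x̂)(-1.5x₁³ + 1.5x̂³) + (x₂ - x̂)(-x₂³ + 1.5x̂³) ≤ -(1/8)V(x, x̂)² + (3/8)x̂⁴. -/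
/-!
Write `e₁ = x₁ - x̂`, `e₂ = x₂ - x̂`. Strong monotonicity of the cube, `(a - b)(a³ - b³) ≥ (a - b)⁴ / 4`,
turns the two dissipation terms into `-(3/8) e₁⁴ - (1/4) e₂⁴`; the mismatch `(1/2) e₂ x̂³` between the
two decay rates is absorbed by Young's inequality `4 a b³ ≤ a⁴ + 3 b⁴`, which produces the offset
`(3/8) x̂⁴`; and `(e₁² + e₂²)² ≤ 2 (e₁⁴ + e₂⁴)` compares what is left with `V²`.
-/

section

variable {R : Type*} [CommRing R] [LinearOrder R] [IsStrictOrderedRing R]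

theorem sub_pow_four_le_four_mul_sub_mul_pow_three_sub (a b : R) :
    (a - b) ^ 4 ≤ 4 * ((a - b) * (a ^ 3 - b ^ 3)) := by
  have h : 4 * ((a - b) * (a ^ 3 - b ^ 3)) - (a - b) ^ 4 = 3 * ((a - b) * (a + b)) ^ 2 := by ring
  rw [← sub_nonneg, h]
  positivity

theorem four_mul_mul_pow_three_le (a b : R) : 4 * (a * b ^ 3) ≤ a ^ 4 + 3 * b ^ 4 := by
  have h : a ^ 4 + 3 * b ^ 4 - 4 * (a * b ^ 3) = ((a - b) * (a + b)) ^ 2 + 2 * ((a - b) * b) ^ 2 := by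
    ring
  rw [← sub_nonneg, h]
  positivity

end

theorem stmt_8_general (x₁ x₂ xh : ℝ) :
    ((x₁ + x₂)/2 - xh)^2 ≤ (1/2) * ((x₁ - xh)^2 + (x₂ - xh)^2) ∧
    (x₁ - xh) * (-1.5 * x₁^3 + 1.5 * xh^3) + (x₂ - xh) * (-x₂^3 + 1.5 * xh^3) ≤
      -(1/8) * ((1/2) * ((x₁ - xh)^2 + (x₂ - xh)^2))^2 + (3/8) * xh^4 := by
  constructor
  · linarith [two_mul_le_add_sq (x₁ - xh) (x₂ - xh)]
  · have h₁ := sub_pow_four_le_four_mul_sub_mul_pow_three_sub x₁ xh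
    have h₂ := sub_pow_four_le_four_mul_sub_mul_pow_three_sub x₂ xh
    have hYoung := four_mul_mul_pow_three_le (x₂ - xh) xh
    have hAMGM := two_mul_le_add_sq ((x₁ - xh) ^ 2) ((x₂ - xh) ^ 2)
    linarith [(by decide : Even 4).pow_nonneg (x₁ - xh), (by decide : Even 4).pow_nonneg (x₂ - xh)]

/-- V(x,x̂) = (1/2)((x₁-x̂)² + (x₂-x̂)²) is a practical simulation function
for the scalar example: output bound (i) and derivative bound (ii). -/
theorem stmt_8 (x₁ x₂ xh uh : ℝ) :
    ((x₁ + x₂)/2 - xh)^2 ≤ (1/2) * ((x₁ - xh)^2 + (x₂ - xh)^2) ∧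
    (x₁ - xh) * (-1.5 * x₁^3 + 1.5 * xh^3) + (x₂ - xh) * (-x₂^3 + 1.5 * xh^3) ≤
      -(1/8) * ((1/2) * ((x₁ - xh)^2 + (x₂ - xh)^2))^2 + (3/8) * xh^4 :=
  stmt_8_general x₁ x₂ xh
end
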